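/- Let R be a finite ring with unity and let x ∈ R. Then |[x]_ℓ| = Σ_{I a left ideal of R with I ⊆ (x)_ℓ} |I| · μ_R(I,(x)_ℓ). -/

import Mathlib

open scoped BigOperators
open Classical

variable {R : Type*}

/-- The left ideal of `R` generated by `x`, i.e. `(x)_ℓ`. -/
def lgen [Ring R] (x : R) : Submodule R R := Submodule.span R {x}

/-- `[x]_ℓ = {y : (y)_ℓ = (x)_ℓ}`. -/
def classL [Ring R] (x : R) : Set R := {y | lgen y = lgen x}

/-- The character sum `C_χ(x) = ∑_{s ∈ [x]_ℓ} χ(s)`. -/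
noncomputable def CchiL [Ring R] (χ : AddChar R ℂ) (x : R) : ℂ :=
  ∑ᶠ s ∈ classL x, χ s

/-- The set `M_R(J)` of maximal `R`-left ideals of `J`. -/
def maxROf [Ring R] (J : Submodule R R) : Set (Submodule R R) :=
  {M | M < J ∧ ∀ I' : Submodule R R, M < I' → ¬ I' < J}

/-- The set `M_R(J, K)` of maximal `R`-left ideals of `J` containing `K`. -/
def maxROfAbove [Ring R] (J K : Submodule R R) : Set (Submodule R R) :=
  {M | M ∈ maxROf J ∧ K ≤ M}

/-- Intersection of the family `E` of left ideals, with the convention that the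
empty intersection is `J`. -/
noncomputable def interIn [Ring R] (J : Submodule R R) (E : Set (Submodule R R)) :
    Submodule R R :=
  if E = ∅ then J else sInf E

/-- The Möbius function `μ_R(I, J)` on left ideals of `R`. -/
noncomputable def muR [Ring R] (I J : Submodule R R) : ℤ :=
  if I = J then 1
  else if I < J ∧ ∃ E : Set (Submodule R R),
      E ⊆ maxROf J ∧ E.Nonempty ∧ interIn J E = I then
    (Nat.card {E : Set (Submodule R R) //
        E ⊆ maxROf J ∧ interIn J E = I ∧ Even (Nat.card E)} : ℤ)
      - (Nat.card {E : Set (Submodule R R) //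
        E ⊆ maxROf J ∧ interIn J E = I ∧ Odd (Nat.card E)} : ℤ)
  else 0

/-- The function `φ_R(I, J)` on left ideals of `R`. -/
noncomputable def phiR [Ring R] (I J : Submodule R R) : ℂ :=
  if I = J then 1
  else if I < J ∧ ∃ E : Set (Submodule R R),
      E ⊆ maxROf J ∧ E.Nonempty ∧ interIn J E = I then
    ∏ᶠ M ∈ maxROfAbove J I, ((Nat.card J : ℂ) / (Nat.card M : ℂ) - 1)
  else 1


/-! `y` generates the same left ideal `J = (x)_ℓ` as `x` iff `y ∈ J` and `y` lies in no maximal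
`R`-left ideal of `J`: a proper subideal `(y)_ℓ < J` is contained in a maximal one because the
subideals of `J` satisfy the ascending chain condition. Inclusion–exclusion over the finite set
`M_R(J)` then gives `|[x]_ℓ| = ∑_{E ⊆ M_R(J)} (-1)^|E| |⋂ E|`, and collecting the sets `E` according
to their intersection `I` produces the coefficient `e - o = μ_R(I, J)` of `|I|`. -/

open Finset

section PowersetCounting

variable {α : Type*}

theorem Nat.card_subsets_eq_card_filter_powerset (s : Finset α) (P : Set α → Prop)
    [DecidablePred fun t : Finset α => P (t : Set α)] :
    Nat.card {E : Set α // E ⊆ s ∧ P E} = #(s.powerset.filter fun t : Finset α => P t) := by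
  rw [← Set.ncard_coe_finset, ← Set.ncard_image_of_injective _ Finset.coe_injective,
    ← Nat.card_coe_set_eq]
  congr
  ext E
  constructor
  · rintro ⟨hEs, hP⟩
    lift E to Finset α using (s.finite_toSet.subset hEs)
    exact ⟨E, by simpa using And.intro hEs hP, rfl⟩
  · rintro ⟨t, ht, rfl⟩
    simpa using ht

theorem Finset.sum_neg_one_pow_card (F : Finset (Finset α)) :
    ∑ t ∈ F, (-1 : ℤ) ^ #t = #{t ∈ F | Even #t} - #{t ∈ F | Odd #t} := by
  rw [← sum_filter_add_sum_filter_not F (fun t => Even #t),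
    sum_congr rfl fun t ht => (mem_filter.1 ht).2.neg_one_pow,
    sum_congr rfl fun t ht => (Nat.not_even_iff_odd.1 (mem_filter.1 ht).2).neg_one_pow]
  simp [sub_eq_add_neg, Nat.not_even_iff_odd]

end PowersetCounting

section LeftIdeals

variable [Ring R] {I J : Submodule R R} {E : Set (Submodule R R)}

@[simp]
lemma interIn_empty (J : Submodule R R) : interIn J ∅ = J := if_pos rfl

lemma interIn_of_nonempty (hE : E.Nonempty) : interIn J E = sInf E := if_neg hE.ne_empty

lemma mem_interIn (hE : E ⊆ maxROf J) {y : R} :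
    y ∈ interIn J E ↔ y ∈ J ∧ ∀ M ∈ E, y ∈ M := by
  rcases E.eq_empty_or_nonempty with rfl | hne
  · simp
  · obtain ⟨M, hM⟩ := hne
    rw [interIn_of_nonempty ⟨M, hM⟩, Submodule.mem_sInf]
    exact ⟨fun hy => ⟨(hE hM).1.le (hy M hM), hy⟩, And.right⟩

lemma interIn_le (hE : E ⊆ maxROf J) : interIn J E ≤ J :=
  fun _ hy => ((mem_interIn hE).1 hy).1

lemma interIn_lt (hE : E ⊆ maxROf J) (hne : E.Nonempty) : interIn J E < J := by
  obtain ⟨M, hM⟩ := hne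
  rw [interIn_of_nonempty ⟨M, hM⟩]
  exact (sInf_le hM).trans_lt (hE hM).1

lemma interIn_eq_self_iff (hE : E ⊆ maxROf J) : interIn J E = J ↔ E = ∅ := by
  refine ⟨fun h => ?_, fun h => h ▸ interIn_empty J⟩
  by_contra hne
  exact (interIn_lt hE (Set.nonempty_iff_ne_empty.2 hne)).ne h

lemma muR_eq_card_even_sub_card_odd (I J : Submodule R R) :
    muR I J =
      (Nat.card {E : Set (Submodule R R) //
          E ⊆ maxROf J ∧ interIn J E = I ∧ Even (Nat.card E)} : ℤ)
        - (Nat.card {E : Set (Submodule R R) //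
          E ⊆ maxROf J ∧ interIn J E = I ∧ Odd (Nat.card E)} : ℤ) := by
  unfold muR
  split_ifs with hIJ hex
  · subst hIJ
    have heven : Nat.card {E : Set (Submodule R R) //
        E ⊆ maxROf I ∧ interIn I E = I ∧ Even (Nat.card E)} = 1 := by
      refine Nat.card_eq_one_iff_unique.2 ⟨⟨fun E E' => Subtype.ext ?_⟩,
        ⟨⟨∅, Set.empty_subset _, interIn_empty I, by simp⟩⟩⟩
      rw [(interIn_eq_self_iff E.2.1).1 E.2.2.1, (interIn_eq_self_iff E'.2.1).1 E'.2.2.1]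
    have hodd : IsEmpty {E : Set (Submodule R R) //
        E ⊆ maxROf I ∧ interIn I E = I ∧ Odd (Nat.card E)} := by
      refine ⟨fun ⟨E, hE, hI, hcard⟩ => ?_⟩
      rw [(interIn_eq_self_iff hE).1 hI] at hcard
      simp at hcard
    rw [heven, Nat.card_of_isEmpty]
    rfl
  · rfl
  · have hempty (p : Set (Submodule R R) → Prop) :
        IsEmpty {E : Set (Submodule R R) // E ⊆ maxROf J ∧ interIn J E = I ∧ p E} := by
      refine ⟨fun ⟨E, hE, hI, _⟩ => ?_⟩
      rcases E.eq_empty_or_nonempty with rfl | hne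
      · exact hIJ (by simpa using hI.symm)
      · exact hex ⟨hI ▸ interIn_lt hE hne, E, hE, hne, hI⟩
    rw [Nat.card_of_isEmpty, Nat.card_of_isEmpty, sub_self]

lemma mem_classL_iff [IsNoetherianRing R] {x y : R} :
    y ∈ classL x ↔ y ∈ lgen x ∧ ∀ M ∈ maxROf (lgen x), y ∉ M := by
  have hle : ∀ {y : R} {I : Submodule R R}, lgen y ≤ I ↔ y ∈ I :=
    Submodule.span_singleton_le_iff_mem _ _
  refine ⟨fun hy => ⟨hle.1 hy.le, fun M hM hyM => (hM.1.trans_le hy.ge).not_ge (hle.2 hyM)⟩,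
    fun ⟨hyx, hmax⟩ => ?_⟩
  refine (hle.2 hyx).eq_of_not_lt fun hlt => ?_
  obtain ⟨M, ⟨hyM, hMx⟩, hM⟩ :=
    wellFounded_gt.has_min {I : Submodule R R | lgen y ≤ I ∧ I < lgen x} ⟨lgen y, le_rfl, hlt⟩
  exact hmax M ⟨hMx, fun I hMI hIx => hM I ⟨hyM.trans hMI.le, hIx⟩ hMI⟩ (hle.1 hyM)

end LeftIdeals

section FiniteRing

variable [Ring R]

lemma muR_eq_sum_neg_one_pow [Finite R] (I J : Submodule R R) :
    muR I J = ∑ t ∈ (maxROf J).toFinite.toFinset.powerset.filter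
      (fun t : Finset (Submodule R R) => interIn J t = I), (-1) ^ #t := by
  have hcount (p : ℕ → Prop) :
      Nat.card {E : Set (Submodule R R) // E ⊆ maxROf J ∧ interIn J E = I ∧ p (Nat.card E)} =
        #((maxROf J).toFinite.toFinset.powerset.filter
          (fun t : Finset (Submodule R R) => interIn J t = I ∧ p #t)) := by
    simpa using Nat.card_subsets_eq_card_filter_powerset (maxROf J).toFinite.toFinset
      (fun E => interIn J E = I ∧ p (Nat.card E))
  rw [muR_eq_card_even_sub_card_odd, hcount, hcount, sum_neg_one_pow_card, filter_filter,
    filter_filter]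
  congr!

lemma card_classL_eq_sum [Fintype R] (x : R) :
    (Nat.card (classL x) : ℤ) = ∑ t ∈ (maxROf (lgen x)).toFinite.toFinset.powerset,
      (-1) ^ #t * (Nat.card (interIn (lgen x) t) : ℤ) := by
  set J := lgen x
  have hincl := inclusion_exclusion_sum_inf_compl (G := ℤ) (maxROf J).toFinite.toFinset
    (fun M => (M : Set R).toFinset) (fun y => if y ∈ J then 1 else 0)
  simp only [sum_boole, smul_eq_mul] at hincl
  have hclass : (classL x).toFinset =
      ((maxROf J).toFinite.toFinset.inf fun M => (M : Set R).toFinsetᶜ).filter (· ∈ J) := by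
    ext y
    simp [mem_classL_iff, mem_inf, J, and_comm]
  have hinter : ∀ t ∈ (maxROf J).toFinite.toFinset.powerset, (interIn J t : Set R).toFinset =
      (t.inf fun M => (M : Set R).toFinset).filter (· ∈ J) := by
    intro t ht
    ext y
    simp [mem_interIn (show (t : Set _) ⊆ maxROf J by simpa using ht), mem_inf, and_comm]
  rw [Nat.card_eq_card_toFinset, hclass, hincl]
  refine sum_congr rfl fun t ht => ?_
  rw [← SetLike.coe_sort_coe, Nat.card_eq_card_toFinset, hinter t ht]

end FiniteRing

theorem stmt9 [Ring R] [Fintype R] (x : R) :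
    (Nat.card (classL x) : ℤ) =
      ∑ᶠ I ∈ {I : Submodule R R | I ≤ lgen x},
        (Nat.card I : ℤ) * muR I (lgen x) := by
  have hmaps : ∀ t ∈ (maxROf (lgen x)).toFinite.toFinset.powerset,
      interIn (lgen x) t ∈ {I : Submodule R R | I ≤ lgen x}.toFinite.toFinset := fun t ht => by
    simpa using interIn_le (by simpa using ht)
  rw [finsum_mem_eq_finite_toFinset_sum _ (Set.toFinite _), card_classL_eq_sum,
    ← sum_fiberwise_of_maps_to hmaps]
  refine sum_congr rfl fun I _ => ?_
  rw [muR_eq_sum_neg_one_pow, mul_sum]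
  refine sum_congr rfl fun t ht => ?_
  rw [(mem_filter.1 ht).2, mul_comm]
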